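/- arXiv:2504.05498 — 5 statements merged into one kernel-verified Lean document; each statement's English description precedes it below -/
import Mathlib

section
/- Let T be a random variable with the standard normal distribution N(0,1) on the real line (Mathlib's gaussianReal 0 1). Then for every real s ≥ 0, the probability P(T > s) satisfies P(T > s) ≤ (1/2)·exp(−s²/2). -/
open MeasureTheory ProbabilityTheory Real Set

lemma gaussianPDFReal_std (x : ℝ) :
    gaussianPDFReal 0 1 x = (Real.sqrt (2 * π))⁻¹ * Real.exp (-(1/2) * x ^ 2) := by
  rw [gaussianPDFReal]
  norm_num
  ring_nf
  exact Or.inl trivial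

lemma integral_Ioi_zero_gaussianPDFReal :
    ∫ x in Ioi (0 : ℝ), gaussianPDFReal 0 1 x = 1 / 2 := by
  simp_rw [gaussianPDFReal_std]
  rw [integral_const_mul, integral_gaussian_Ioi]
  have h2π : (0:ℝ) < 2 * π := by positivity
  rw [show π / (1/2) = 2 * π by ring]
  field_simp

/-- Standard normal one-sided tail bound: P(T > s) ≤ (1/2)·exp(−s²/2) for s ≥ 0. -/
theorem gaussian_one_sided_tail_bound (s : ℝ) (hs : 0 ≤ s) :
    gaussianReal 0 1 {r : ℝ | s < r} ≤ ENNReal.ofReal ((1 / 2) * Real.exp (-(s ^ 2) / 2)) := by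
  have h1 : ({r : ℝ | s < r} : Set ℝ) = Ioi s := rfl
  rw [h1, gaussianReal_apply_eq_integral 0 one_ne_zero]
  apply ENNReal.ofReal_le_ofReal
  set c : ℝ := Real.exp (-(s ^ 2) / 2) with hc
  have hcpos : 0 < c := Real.exp_pos _
  -- pointwise bound on Ioi s
  have hpt : ∀ x ∈ Ioi s, gaussianPDFReal 0 1 x ≤ c * gaussianPDFReal 0 1 (x - s) := by
    intro x hx
    rw [gaussianPDFReal_std, gaussianPDFReal_std, hc]
    rw [mul_comm c, mul_assoc]
    apply mul_le_mul_of_nonneg_left _ (by positivity)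
    rw [← Real.exp_add]
    apply Real.exp_le_exp.2
    have hxs : s < x := hx
    nlinarith [mul_nonneg hs (le_of_lt (sub_pos.2 hxs))]
  have hint1 : IntegrableOn (gaussianPDFReal 0 1) (Ioi s) :=
    (integrable_gaussianPDFReal 0 1).integrableOn
  have hint2 : IntegrableOn (fun x => c * gaussianPDFReal 0 1 (x - s)) (Ioi s) :=
    (((integrable_gaussianPDFReal 0 1).comp_sub_right s).const_mul c).integrableOn
  calc ∫ x in Ioi s, gaussianPDFReal 0 1 x
      ≤ ∫ x in Ioi s, c * gaussianPDFReal 0 1 (x - s) :=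
        setIntegral_mono_on hint1 hint2 measurableSet_Ioi hpt
    _ = c * ∫ x in Ioi s, gaussianPDFReal 0 1 (x - s) := integral_const_mul c _
    _ = c * ∫ x in Ioi (0:ℝ), gaussianPDFReal 0 1 x := by
        congr 1
        rw [← integral_indicator measurableSet_Ioi, ← integral_indicator measurableSet_Ioi]
        rw [← integral_sub_right_eq_self (fun x => (Ioi (0:ℝ)).indicator (gaussianPDFReal 0 1) x) s]
        congr 1 with x
        by_cases h : x ∈ Ioi s
        · rw [indicator_of_mem h, indicator_of_mem (by simpa [sub_pos] using (h : s < x))]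
        · rw [indicator_of_notMem h, indicator_of_notMem]
          simpa [sub_pos] using h
    _ = c * (1 / 2) := by rw [integral_Ioi_zero_gaussianPDFReal]
    _ = 1 / 2 * Real.exp (-(s ^ 2) / 2) := by rw [mul_comm]
end

section
/- Let (Ω, P) be a probability space, let Z be a finite nonempty index set of cardinality M, let α ∈ (0,1), and for each positive integer n set β_n = 2·log(π²·n²·M/(6α)). Suppose T_{n,z} : Ω → ℝ, for n ≥ 1 and z ∈ Z, is a family of random variables each of which has the standard normal distribution N(0,1). Then P( for all n ≥ 1 and all z ∈ Z, |T_{n,z}| ≤ √β_n ) ≥ 1 − α. -/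
open MeasureTheory ProbabilityTheory Real Set
open scoped ENNReal

/-- Gaussian half tail bound: ∫_{Ioi t} φ ≤ e^{-t²/2}/2 for t ≥ 0. -/
lemma gauss_halftail {t : ℝ} (ht : 0 ≤ t) :
    ∫ x in Set.Ioi t, gaussianPDFReal 0 1 x ≤ Real.exp (-(t^2) / 2) / 2 := by
  have hpdf : ∀ x : ℝ, gaussianPDFReal 0 1 x
      = (Real.sqrt (2 * Real.pi))⁻¹ * Real.exp (-(x^2) / 2) := by
    intro x
    simp [gaussianPDFReal]
  have hint0 : ∫ x in Set.Ioi (0:ℝ), gaussianPDFReal 0 1 x = 1/2 := by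
    simp_rw [hpdf]
    rw [MeasureTheory.integral_const_mul]
    have : ∀ x : ℝ, Real.exp (-(x^2)/2) = Real.exp (-(1/2) * x^2) := by
      intro x; ring_nf
    simp_rw [this]
    rw [integral_gaussian_Ioi (1/2)]
    rw [show Real.pi / (1/2) = 2 * Real.pi by ring]
    rw [inv_mul_eq_div, div_div, div_eq_div_iff (by positivity) (by norm_num)]
    rw [← Real.sqrt_mul_self (by positivity : (0:ℝ) ≤ Real.sqrt (2*Real.pi))]
    ring
  -- translation
  have htrans : ∫ x in Set.Ioi t, gaussianPDFReal 0 1 (x - t)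
      = ∫ x in Set.Ioi (0:ℝ), gaussianPDFReal 0 1 x := by
    have hmp : MeasurePreserving (fun x : ℝ => x - t) volume volume :=
      measurePreserving_sub_right volume t
    have hemb : MeasurableEmbedding (fun x : ℝ => x - t) :=
      (MeasurableEquiv.subRight t).measurableEmbedding
    have := hmp.setIntegral_preimage_emb hemb (gaussianPDFReal 0 1) (Set.Ioi 0)
    rw [show (fun x : ℝ => x - t) ⁻¹' (Set.Ioi 0) = Set.Ioi t by
      ext x; simp [sub_pos]] at this
    exact this
  have hmono : ∫ x in Set.Ioi t, gaussianPDFReal 0 1 x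
      ≤ ∫ x in Set.Ioi t, Real.exp (-(t^2)/2) * gaussianPDFReal 0 1 (x - t) := by
    refine setIntegral_mono_on ?_ ?_ measurableSet_Ioi ?_
    · exact (integrable_gaussianPDFReal 0 1).restrict
    · exact (((integrable_gaussianPDFReal 0 1).comp_sub_right t).const_mul _).restrict
    · intro x hx
      rw [hpdf, hpdf]
      rw [show Real.exp (-(t^2)/2) * ((Real.sqrt (2*Real.pi))⁻¹ * Real.exp (-((x-t)^2)/2))
        = (Real.sqrt (2*Real.pi))⁻¹ * (Real.exp (-(t^2)/2) * Real.exp (-((x-t)^2)/2)) by ring]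
      rw [← Real.exp_add]
      refine mul_le_mul_of_nonneg_left ?_ (by positivity)
      rw [Real.exp_le_exp]
      have hxt : t ≤ x := le_of_lt hx
      nlinarith
  calc ∫ x in Set.Ioi t, gaussianPDFReal 0 1 x
      ≤ ∫ x in Set.Ioi t, Real.exp (-(t^2)/2) * gaussianPDFReal 0 1 (x - t) := hmono
    _ = Real.exp (-(t^2)/2) * ∫ x in Set.Ioi t, gaussianPDFReal 0 1 (x - t) := by
        rw [MeasureTheory.integral_const_mul]
    _ = Real.exp (-(t^2)/2) * (1/2) := by rw [htrans, hint0]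
    _ = Real.exp (-(t^2)/2) / 2 := by ring

lemma gauss_tail {t : ℝ} (ht : 0 ≤ t) :
    gaussianReal 0 1 {x | t < |x|} ≤ ENNReal.ofReal (Real.exp (-(t^2) / 2)) := by
  have hset : {x : ℝ | t < |x|} = Set.Iio (-t) ∪ Set.Ioi t := by
    ext x
    simp only [Set.mem_setOf_eq, Set.mem_union, Set.mem_Iio, Set.mem_Ioi, lt_abs, lt_neg]
    tauto
  rw [hset]
  refine le_trans (measure_union_le _ _) ?_
  have hIio : ∫ x in Set.Iio (-t), gaussianPDFReal 0 1 x
      = ∫ x in Set.Ioi t, gaussianPDFReal 0 1 x := by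
    have := integral_comp_neg_Iic (-(-t)) (gaussianPDFReal 0 1)
    have h2 := integral_comp_neg_Ioi t (gaussianPDFReal 0 1)
    -- h2 : ∫ x in Ioi t, f (-x) = ∫ x in Iic (-t), f x
    have heven : ∀ x : ℝ, gaussianPDFReal 0 1 (-x) = gaussianPDFReal 0 1 x := by
      intro x; simp [gaussianPDFReal]
    simp_rw [heven] at h2
    rw [← MeasureTheory.integral_Iic_eq_integral_Iio]
    exact h2.symm
  rw [gaussianReal_apply_eq_integral 0 one_ne_zero, gaussianReal_apply_eq_integral 0 one_ne_zero,
    hIio]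
  rw [← ENNReal.ofReal_add
    (setIntegral_nonneg measurableSet_Ioi fun x _ => gaussianPDFReal_nonneg 0 1 x)
    (setIntegral_nonneg measurableSet_Ioi fun x _ => gaussianPDFReal_nonneg 0 1 x)]
  · refine ENNReal.ofReal_le_ofReal ?_
    have h := gauss_halftail ht
    linarith

/-- Union bound over n ≥ 1 and a finite set Z of standard normal variables:
    P(∀ n ≥ 1, ∀ z, |T_{n,z}| ≤ √β_n) ≥ 1 − α, where β_n = 2·log(π²·n²·M/(6α)). -/
theorem gaussian_uniform_confidence {Ω : Type*} [MeasurableSpace Ω]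
    (P : Measure Ω) [IsProbabilityMeasure P]
    {Z : Type*} [Fintype Z] [Nonempty Z] (M : ℕ) (hM : M = Fintype.card Z)
    (α : ℝ) (hα0 : 0 < α) (hα1 : α < 1)
    (β : ℕ → ℝ)
    (hβ : ∀ n : ℕ, β n = 2 * Real.log (Real.pi ^ 2 * (n : ℝ) ^ 2 * (M : ℝ) / (6 * α)))
    (T : ℕ → Z → Ω → ℝ)
    (hTm : ∀ n z, Measurable (T n z))
    (hT : ∀ n z, P.map (T n z) = gaussianReal 0 1) :
    ENNReal.ofReal (1 - α) ≤
      P {ω | ∀ n : ℕ, 1 ≤ n → ∀ z : Z, |T n z ω| ≤ Real.sqrt (β n)} := by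
  classical
  have hM1 : 1 ≤ M := by rw [hM]; exact Fintype.card_pos
  have hπ : (0:ℝ) < Real.pi := Real.pi_pos
  set S := {ω | ∀ n : ℕ, 1 ≤ n → ∀ z : Z, |T n z ω| ≤ Real.sqrt (β n)} with hSdef
  -- measurability of S
  have hSm : MeasurableSet S := by
    have hrw : S = ⋂ n, ⋂ z, {ω | 1 ≤ n → |T n z ω| ≤ Real.sqrt (β n)} := by
      ext ω; simp only [hSdef, Set.mem_setOf_eq, Set.mem_iInter]; tauto
    rw [hrw]
    refine MeasurableSet.iInter fun n => MeasurableSet.iInter fun z => ?_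
    by_cases h : 1 ≤ n
    · have : {ω | 1 ≤ n → |T n z ω| ≤ Real.sqrt (β n)}
          = {ω | |T n z ω| ≤ Real.sqrt (β n)} := by ext ω; simp [h]
      rw [this]
      exact measurableSet_le (hTm n z).abs measurable_const
    · have : {ω | 1 ≤ n → |T n z ω| ≤ Real.sqrt (β n)} = Set.univ := by
        ext ω; simp [h]
      rw [this]; exact MeasurableSet.univ
  -- bad events
  set A : ℕ → Z → Set Ω := fun n z =>
    if 1 ≤ n then (T n z) ⁻¹' {x | Real.sqrt (β n) < |x|} else ∅ with hAdef
  have hcompl : Sᶜ ⊆ ⋃ n, ⋃ z, A n z := by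
    intro ω hω
    simp only [hSdef, Set.mem_compl_iff, Set.mem_setOf_eq, not_forall] at hω
    obtain ⟨n, hn, z, hz⟩ := hω
    refine Set.mem_iUnion.2 ⟨n, Set.mem_iUnion.2 ⟨z, ?_⟩⟩
    simp only [hAdef, if_pos hn]
    exact not_le.mp hz
  -- single event bound
  have hsingle : ∀ n : ℕ, 1 ≤ n → ∀ z : Z,
      P (A n z) ≤ ENNReal.ofReal (6 * α / (Real.pi ^ 2 * (n:ℝ) ^ 2 * M)) := by
    intro n hn z
    have hn' : (1:ℝ) ≤ (n:ℝ) := by exact_mod_cast hn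
    have hM' : (1:ℝ) ≤ (M:ℝ) := by exact_mod_cast hM1
    set R : ℝ := Real.pi ^ 2 * (n:ℝ) ^ 2 * (M:ℝ) / (6 * α) with hRdef
    have hRpos : 0 < R := by positivity
    have hR1 : 1 ≤ R := by
      rw [hRdef, le_div_iff₀ (by positivity)]
      have h9 : (9:ℝ) < Real.pi ^ 2 := by nlinarith [Real.pi_gt_three]
      have hnn : (1:ℝ) ≤ (n:ℝ)^2 := by nlinarith
      nlinarith [mul_le_mul_of_nonneg_left hM' (by positivity : (0:ℝ) ≤ Real.pi^2 * (n:ℝ)^2)]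
    have hβ0 : 0 ≤ β n := by
      rw [hβ n]
      have := Real.log_nonneg hR1
      linarith
    have hms : MeasurableSet {x : ℝ | Real.sqrt (β n) < |x|} :=
      measurableSet_lt measurable_const (continuous_abs.measurable)
    have hmap : P (A n z) = gaussianReal 0 1 {x : ℝ | Real.sqrt (β n) < |x|} := by
      rw [hAdef]
      simp only [if_pos hn]
      rw [← Measure.map_apply (hTm n z) hms, hT n z]
    rw [hmap]
    refine le_trans (gauss_tail (Real.sqrt_nonneg _)) ?_
    rw [Real.sq_sqrt hβ0, hβ n]
    have : Real.exp (-(2 * Real.log R) / 2) = R⁻¹ := by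
      rw [show -(2 * Real.log R) / 2 = -Real.log R by ring, Real.exp_neg, Real.exp_log hRpos]
    rw [this, hRdef]
    apply le_of_eq
    congr 1
    field_simp
  -- sum over z
  have hsumz : ∀ n : ℕ,
      ∑' z : Z, P (A n z) ≤ ENNReal.ofReal (6 * α / Real.pi ^ 2 * (1 / (n:ℝ) ^ 2)) := by
    intro n
    by_cases hn : 1 ≤ n
    · have hn0 : (n:ℝ) ≠ 0 := by positivity
      calc ∑' z : Z, P (A n z)
          ≤ ∑' z : Z, ENNReal.ofReal (6 * α / (Real.pi ^ 2 * (n:ℝ) ^ 2 * M)) :=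
            ENNReal.tsum_le_tsum fun z => hsingle n hn z
        _ = (Fintype.card Z) • ENNReal.ofReal (6 * α / (Real.pi ^ 2 * (n:ℝ) ^ 2 * M)) := by
            rw [tsum_fintype]; simp
        _ = ENNReal.ofReal ((M:ℝ) * (6 * α / (Real.pi ^ 2 * (n:ℝ) ^ 2 * M))) := by
            rw [← hM, nsmul_eq_mul, ← ENNReal.ofReal_natCast M,
              ← ENNReal.ofReal_mul (by positivity)]
        _ = ENNReal.ofReal (6 * α / Real.pi ^ 2 * (1 / (n:ℝ) ^ 2)) := by
            congr 1
            have hMne : (M:ℝ) ≠ 0 := by positivity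
            field_simp
    · have hn0 : n = 0 := by omega
      subst hn0
      simp [hAdef]
  -- total bound on complement
  have hc : P Sᶜ ≤ ENNReal.ofReal α := by
    calc P Sᶜ ≤ P (⋃ n, ⋃ z, A n z) := measure_mono hcompl
      _ ≤ ∑' n : ℕ, P (⋃ z, A n z) := measure_iUnion_le _
      _ ≤ ∑' n : ℕ, ∑' z : Z, P (A n z) :=
          ENNReal.tsum_le_tsum fun n => measure_iUnion_le _
      _ ≤ ∑' n : ℕ, ENNReal.ofReal (6 * α / Real.pi ^ 2 * (1 / (n:ℝ) ^ 2)) :=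
          ENNReal.tsum_le_tsum hsumz
      _ = ENNReal.ofReal (∑' n : ℕ, 6 * α / Real.pi ^ 2 * (1 / (n:ℝ) ^ 2)) := by
          rw [ENNReal.ofReal_tsum_of_nonneg (fun n => by positivity)
            (hasSum_zeta_two.summable.mul_left _)]
      _ = ENNReal.ofReal α := by
          congr 1
          rw [(hasSum_zeta_two.mul_left (6 * α / Real.pi ^ 2)).tsum_eq]
          field_simp
  -- conclude
  have h1 : P S + P Sᶜ = 1 := prob_add_prob_compl hSm
  have h2 : (1:ℝ≥0∞) ≤ P S + ENNReal.ofReal α := by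
    rw [← h1]; exact add_le_add_right hc _
  have h3 : ENNReal.ofReal (1 - α) = 1 - ENNReal.ofReal α := by
    rw [ENNReal.ofReal_sub _ hα0.le, ENNReal.ofReal_one]
  rw [h3]
  exact tsub_le_iff_right.mpr h2
end

section
/- (Claim 1 in the proof of Theorem 1.) Let (W, μ) be a measure space with μ a finite measure, and let ε > 0 be a real number with ε < μ(W). For a measurable function u : W → ℝ define Q_ε(u) = sup { ν ∈ ℝ : μ({ w : u(w) < ν }) < ε }. Let f, σ : W → ℝ be bounded measurable functions with σ(w) ≥ 0 for all w, let c ≥ 0 be a real number, and set u = f + c·σ and ℓ = f − c·σ. Let A = { w ∈ W : ℓ(w) ≤ Q_ε(u) }. Then Q_ε(u) ≤ Q_ε(f) + c · sup_{w ∈ A} σ(w). -/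
open MeasureTheory

/-- The ε-quantile-type functional Q_ε(u) = sup { ν : μ({u < ν}) < ε }. -/
noncomputable def Qfun {W : Type*} [MeasurableSpace W] (μ : Measure W) (ε : ℝ)
    (u : W → ℝ) : ℝ :=
  sSup {ν : ℝ | μ {w | u w < ν} < ENNReal.ofReal ε}

lemma Qfun_set_nonempty {W : Type*} [MeasurableSpace W] (μ : Measure W)
    (ε : ℝ) (hε : 0 < ε) (g : W → ℝ) (C : ℝ) (hC : ∀ w, |g w| ≤ C) :
    {ν : ℝ | μ {w | g w < ν} < ENNReal.ofReal ε}.Nonempty := by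
  refine ⟨-C, ?_⟩
  have : {w | g w < -C} = ∅ := by
    ext w; simp only [Set.mem_setOf_eq, Set.mem_empty_iff_false, iff_false, not_lt]
    have := abs_le.1 (hC w); linarith [this.1]
  simp only [Set.mem_setOf_eq, this, measure_empty]
  exact ENNReal.ofReal_pos.2 hε

lemma Qfun_set_bddAbove {W : Type*} [MeasurableSpace W] (μ : Measure W)
    (ε : ℝ) (hεμ : ENNReal.ofReal ε < μ Set.univ)
    (g : W → ℝ) (C : ℝ) (hC : ∀ w, |g w| ≤ C) :
    BddAbove {ν : ℝ | μ {w | g w < ν} < ENNReal.ofReal ε} := by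
  refine ⟨C + 1, fun ν hν => ?_⟩
  by_contra h
  push_neg at h
  have : {w | g w < ν} = Set.univ := by
    ext w; simp only [Set.mem_setOf_eq, Set.mem_univ, iff_true]
    have := abs_le.1 (hC w); linarith [this.2]
  rw [Set.mem_setOf_eq, this] at hν
  exact absurd (hν.trans hεμ) (lt_irrefl _)

/-- Claim 1 in the proof of Theorem 1: with u = f + c·σ, ℓ = f − c·σ and
    A = { w : ℓ(w) ≤ Q_ε(u) }, we have Q_ε(u) ≤ Q_ε(f) + c · sup_{A} σ. -/
theorem theorem_one_claim_one {W : Type*} [MeasurableSpace W]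
    (μ : Measure W) [IsFiniteMeasure μ]
    (ε : ℝ) (hε : 0 < ε) (hεμ : ENNReal.ofReal ε < μ Set.univ)
    (f σ : W → ℝ) (hfm : Measurable f) (hσm : Measurable σ)
    (hfb : ∃ C, ∀ w, |f w| ≤ C) (hσb : ∃ C, ∀ w, |σ w| ≤ C)
    (hσ0 : ∀ w, 0 ≤ σ w) (c : ℝ) (hc : 0 ≤ c) :
    Qfun μ ε (fun w => f w + c * σ w) ≤
      Qfun μ ε f +
        c * sSup (σ '' {w | f w - c * σ w ≤ Qfun μ ε (fun w => f w + c * σ w)}) := by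
  obtain ⟨Cf, hCf⟩ := hfb
  obtain ⟨Cσ, hCσ⟩ := hσb
  set u : W → ℝ := fun w => f w + c * σ w with hu
  have hCu : ∀ w, |u w| ≤ Cf + c * Cσ := fun w => by
    have h1 := abs_le.1 (hCf w)
    have h2 := abs_le.1 (hCσ w)
    have h3 : c * σ w ≤ c * Cσ := mul_le_mul_of_nonneg_left h2.2 hc
    have h4 : -(c * Cσ) ≤ c * σ w := by nlinarith [h2.1]
    rw [abs_le]; constructor <;> simp only [hu] <;> nlinarith
  set Q : ℝ := Qfun μ ε u with hQ
  set A : Set W := {w | f w - c * σ w ≤ Q} with hA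
  set S : ℝ := sSup (σ '' A) with hS
  have hBA : BddAbove (σ '' A) := by
    refine ⟨Cσ, fun x hx => ?_⟩
    obtain ⟨w, _, rfl⟩ := hx
    exact (abs_le.1 (hCσ w)).2
  have hS0 : 0 ≤ S := by
    rcases (σ '' A).eq_empty_or_nonempty with h | h
    · rw [hS, h, Real.sSup_empty]
    · obtain ⟨x, hx⟩ := h
      obtain ⟨w, _, rfl⟩ := hx
      exact le_trans (hσ0 w) (le_csSup hBA ⟨w, ‹w ∈ A›, rfl⟩)
  have hcS : 0 ≤ c * S := mul_nonneg hc hS0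
  have hbddu := Qfun_set_bddAbove μ ε hεμ u _ hCu
  have hbddf := Qfun_set_bddAbove μ ε hεμ f _ hCf
  have hneu := Qfun_set_nonempty μ ε hε u _ hCu
  refine csSup_le hneu (fun ν hν => ?_)
  have hνQ : ν ≤ Q := le_csSup hbddu hν
  have hsub : {w | f w < ν - c * S} ⊆ {w | u w < ν} := by
    intro w hw
    simp only [Set.mem_setOf_eq] at hw ⊢
    by_cases hwA : w ∈ A
    · have hσS : σ w ≤ S := le_csSup hBA ⟨w, hwA, rfl⟩
      have : c * σ w ≤ c * S := mul_le_mul_of_nonneg_left hσS hc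
      simp only [hu]; linarith
    · simp only [hA, Set.mem_setOf_eq, not_le] at hwA
      have : 0 ≤ c * σ w := mul_nonneg hc (hσ0 w)
      linarith
  have hmeas : μ {w | f w < ν - c * S} < ENNReal.ofReal ε :=
    lt_of_le_of_lt (measure_mono hsub) hν
  have : ν - c * S ≤ Qfun μ ε f := le_csSup hbddf hmeas
  linarith
end

section
/- (Claim 2 in the proof of Theorem 1.) Let (W, μ) be a measure space with μ a finite measure, and let ε > 0 be a real number with ε < μ(W). For a measurable function u : W → ℝ define Q_ε(u) = sup { ν ∈ ℝ : μ({ w : u(w) < ν }) < ε }. Let f, σ : W → ℝ be bounded measurable functions with σ(w) ≥ 0 for all w, let c ≥ 0 be a real number, and set u = f + c·σ and ℓ = f − c·σ. Let A = { w ∈ W : ℓ(w) ≤ Q_ε(u) }. Then Q_ε(f) ≤ Q_ε(ℓ) + c · sup_{w ∈ A} σ(w). -/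
open MeasureTheory

/-- Claim 2 in the proof of Theorem 1: with u = f + c·σ, ℓ = f − c·σ and
    A = { w : ℓ(w) ≤ Q_ε(u) }, we have Q_ε(f) ≤ Q_ε(ℓ) + c · sup_{A} σ. -/
theorem theorem_one_claim_two {W : Type*} [MeasurableSpace W]
    (μ : Measure W) [IsFiniteMeasure μ]
    (ε : ℝ) (hε : 0 < ε) (hεμ : ENNReal.ofReal ε < μ Set.univ)
    (f σ : W → ℝ) (hfm : Measurable f) (hσm : Measurable σ)
    (hfb : ∃ C, ∀ w, |f w| ≤ C) (hσb : ∃ C, ∀ w, |σ w| ≤ C)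
    (hσ0 : ∀ w, 0 ≤ σ w) (c : ℝ) (hc : 0 ≤ c) :
    Qfun μ ε f ≤
      Qfun μ ε (fun w => f w - c * σ w) +
        c * sSup (σ '' {w | f w - c * σ w ≤ Qfun μ ε (fun w => f w + c * σ w)}) := by
  obtain ⟨Cf, hCf⟩ := hfb
  obtain ⟨Cσ, hCσ⟩ := hσb
  set u : W → ℝ := fun w => f w + c * σ w with hu
  set ℓ : W → ℝ := fun w => f w - c * σ w with hℓ
  set Qu := Qfun μ ε u with hQu
  set A : Set W := {w | ℓ w ≤ Qu} with hA
  set s := sSup (σ '' A) with hs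
  -- boundedness of the sets defining Qfun
  have hbddS : ∀ (v : W → ℝ) (C : ℝ), (∀ w, |v w| ≤ C) →
      BddAbove {ν : ℝ | μ {w | v w < ν} < ENNReal.ofReal ε} := by
    intro v C hC
    refine ⟨C + 1, fun ν hν => ?_⟩
    by_contra h
    push_neg at h
    have : {w | v w < ν} = Set.univ := by
      ext w
      simp only [Set.mem_setOf_eq, Set.mem_univ, iff_true]
      have := (abs_le.mp (hC w)).2
      linarith
    simp only [Set.mem_setOf_eq, this] at hν
    exact absurd hν (not_lt.mpr hεμ.le)
  -- nonemptiness of the sets defining Qfun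
  have hneS : ∀ (v : W → ℝ) (C : ℝ), (∀ w, |v w| ≤ C) →
      ({ν : ℝ | μ {w | v w < ν} < ENNReal.ofReal ε}).Nonempty := by
    intro v C hC
    refine ⟨-C, ?_⟩
    have : {w | v w < -C} = ∅ := by
      ext w
      simp only [Set.mem_setOf_eq, Set.mem_empty_iff_false, iff_false, not_lt]
      exact (abs_le.mp (hC w)).1
    simp only [Set.mem_setOf_eq, this, measure_empty]
    exact ENNReal.ofReal_pos.mpr hε
  have huB : ∀ w, |u w| ≤ Cf + c * Cσ := by
    intro w
    have h1 := abs_le.mp (hCf w)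
    have h2 := abs_le.mp (hCσ w)
    have h3 : c * σ w ≤ c * Cσ := mul_le_mul_of_nonneg_left ((abs_le.mp (hCσ w)).2) hc
    have h4 : -(c * Cσ) ≤ c * σ w := by
      have := mul_le_mul_of_nonneg_left ((abs_le.mp (hCσ w)).1) hc
      nlinarith
    rw [abs_le]
    constructor <;> simp only [hu] <;> nlinarith
  have hℓB : ∀ w, |ℓ w| ≤ Cf + c * Cσ := by
    intro w
    have h1 := abs_le.mp (hCf w)
    have h3 : c * σ w ≤ c * Cσ := mul_le_mul_of_nonneg_left ((abs_le.mp (hCσ w)).2) hc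
    have h4 : -(c * Cσ) ≤ c * σ w := by
      have := mul_le_mul_of_nonneg_left ((abs_le.mp (hCσ w)).1) hc
      nlinarith
    rw [abs_le]
    constructor <;> simp only [hℓ] <;> nlinarith
  -- s ≥ 0
  have hs0 : 0 ≤ s := by
    apply Real.sSup_nonneg
    rintro x ⟨w, _, rfl⟩
    exact hσ0 w
  have hcs0 : 0 ≤ c * s := mul_nonneg hc hs0
  -- σ '' A is bounded above
  have hbddA : BddAbove (σ '' A) := by
    refine ⟨Cσ, ?_⟩
    rintro x ⟨w, _, rfl⟩
    exact (abs_le.mp (hCσ w)).2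
  -- main argument
  apply csSup_le (hneS f Cf hCf)
  intro ν hν
  simp only [Set.mem_setOf_eq] at hν
  -- ν ≤ Qu
  have hνu : ν ≤ Qu := by
    apply le_csSup (hbddS u (Cf + c * Cσ) huB)
    simp only [Set.mem_setOf_eq]
    refine lt_of_le_of_lt (measure_mono ?_) hν
    intro w hw
    simp only [Set.mem_setOf_eq, hu] at hw ⊢
    nlinarith [hσ0 w]
  -- ν - c * s ∈ S_ℓ
  have hkey : ν - c * s ≤ Qfun μ ε ℓ := by
    apply le_csSup (hbddS ℓ (Cf + c * Cσ) hℓB)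
    simp only [Set.mem_setOf_eq]
    refine lt_of_le_of_lt (measure_mono ?_) hν
    intro w hw
    simp only [Set.mem_setOf_eq, hℓ] at hw ⊢
    by_cases hwA : ℓ w ≤ Qu
    · have hσs : σ w ≤ s := le_csSup hbddA ⟨w, hwA, rfl⟩
      have : c * σ w ≤ c * s := mul_le_mul_of_nonneg_left hσs hc
      simp only [hℓ] at hwA
      nlinarith
    · push_neg at hwA
      simp only [hℓ] at hwA
      nlinarith
  have : Qfun μ ε ℓ = Qfun μ ε (fun w => f w - c * σ w) := rfl
  linarith
end

section
/- (Deterministic core of Theorem 1.) Let (W, μ) be a measure space with μ a finite measure, and let ε > 0 be a real number with ε < μ(W). For a measurable function u : W → ℝ define Q_ε(u) = sup { ν ∈ ℝ : μ({ w : u(w) < ν }) < ε }. Let f, σ, h : W → ℝ be bounded measurable functions with σ(w) ≥ 0 for all w, let c ≥ 0 be a real number, and suppose |h(w) − f(w)| ≤ c·σ(w) for all w ∈ W. Set u = f + c·σ and ℓ = f − c·σ, and let A = { w ∈ W : ℓ(w) ≤ Q_ε(u) }. Then |Q_ε(f) − Q_ε(h)| ≤ c · sup_{w ∈ A} σ(w).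 -/
open MeasureTheory Filter Topology

section aux
variable {W : Type*} [MeasurableSpace W] {μ : Measure W} {ε : ℝ}

lemma Qset_nonempty (hε : 0 < ε) {u : W → ℝ} {C : ℝ} (hub : ∀ w, |u w| ≤ C) :
    {ν : ℝ | μ {w | u w < ν} < ENNReal.ofReal ε}.Nonempty := by
  refine ⟨-(C + 1), ?_⟩
  have hempty : {w | u w < -(C + 1)} = (∅ : Set W) := by
    ext w
    simp only [Set.mem_setOf_eq, Set.mem_empty_iff_false, iff_false, not_lt]
    have := (abs_le.mp (hub w)).1; linarith
  simp only [Set.mem_setOf_eq, hempty, measure_empty]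
  exact ENNReal.ofReal_pos.mpr hε

lemma Qset_bddAbove (hεμ : ENNReal.ofReal ε < μ Set.univ) {u : W → ℝ} {C : ℝ}
    (hub : ∀ w, |u w| ≤ C) :
    BddAbove {ν : ℝ | μ {w | u w < ν} < ENNReal.ofReal ε} := by
  refine ⟨C + 1, fun ν hν => ?_⟩
  by_contra hlt
  push_neg at hlt
  have huniv : {w | u w < ν} = (Set.univ : Set W) := by
    ext w
    simp only [Set.mem_setOf_eq, Set.mem_univ, iff_true]
    have := (abs_le.mp (hub w)).2; linarith
  rw [Set.mem_setOf_eq, huniv] at hν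
  exact absurd hν (not_lt.mpr hεμ.le)

lemma Qfun_mono (hε : 0 < ε) (hεμ : ENNReal.ofReal ε < μ Set.univ)
    {u v : W → ℝ} {C D : ℝ} (hu : ∀ w, |u w| ≤ C) (hv : ∀ w, |v w| ≤ D)
    (huv : ∀ w, u w ≤ v w) : Qfun μ ε u ≤ Qfun μ ε v := by
  refine csSup_le_csSup (Qset_bddAbove hεμ hv) (Qset_nonempty hε hu) ?_
  intro ν hν
  refine lt_of_le_of_lt (measure_mono ?_) hν
  intro w hw
  exact lt_of_le_of_lt (huv w) hw

end aux

/-- Deterministic core of Theorem 1: if |h − f| ≤ c·σ pointwise, with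
    u = f + c·σ, ℓ = f − c·σ and A = { w : ℓ(w) ≤ Q_ε(u) }, then
    |Q_ε(f) − Q_ε(h)| ≤ c · sup_{A} σ. -/
theorem theorem_one_deterministic {W : Type*} [MeasurableSpace W]
    (μ : Measure W) [IsFiniteMeasure μ]
    (ε : ℝ) (hε : 0 < ε) (hεμ : ENNReal.ofReal ε < μ Set.univ)
    (f σ h : W → ℝ) (hfm : Measurable f) (hσm : Measurable σ) (hhm : Measurable h)
    (hfb : ∃ C, ∀ w, |f w| ≤ C) (hσb : ∃ C, ∀ w, |σ w| ≤ C) (hhb : ∃ C, ∀ w, |h w| ≤ C)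
    (hσ0 : ∀ w, 0 ≤ σ w) (c : ℝ) (hc : 0 ≤ c)
    (hhf : ∀ w, |h w - f w| ≤ c * σ w) :
    |Qfun μ ε f - Qfun μ ε h| ≤
      c * sSup (σ '' {w | f w - c * σ w ≤ Qfun μ ε (fun w => f w + c * σ w)}) := by
  obtain ⟨Cf, hCf⟩ := hfb
  obtain ⟨Cσ, hCσ⟩ := hσb
  obtain ⟨Ch, hCh⟩ := hhb
  set u : W → ℝ := fun w => f w + c * σ w with hu_def
  set l : W → ℝ := fun w => f w - c * σ w with hl_def
  have hcσ_nonneg : ∀ w, 0 ≤ c * σ w := fun w => mul_nonneg hc (hσ0 w)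
  have hcσ_le : ∀ w, c * σ w ≤ c * Cσ := fun w =>
    mul_le_mul_of_nonneg_left ((abs_le.mp (hCσ w)).2) hc
  have hub : ∀ w, |u w| ≤ Cf + c * Cσ := fun w => by
    have h1 := abs_le.mp (hCf w); have h2 := hcσ_nonneg w; have h3 := hcσ_le w
    rw [abs_le]; constructor <;> simp only [hu_def] <;> nlinarith
  have hlb : ∀ w, |l w| ≤ Cf + c * Cσ := fun w => by
    have h1 := abs_le.mp (hCf w); have h2 := hcσ_nonneg w; have h3 := hcσ_le w
    rw [abs_le]; constructor <;> simp only [hl_def] <;> nlinarith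
  have hlu : ∀ w, l w ≤ u w := fun w => by
    have := hcσ_nonneg w; simp only [hl_def, hu_def]; linarith
  have hlf : ∀ w, l w ≤ f w := fun w => by
    have := hcσ_nonneg w; simp only [hl_def]; linarith
  have hfu : ∀ w, f w ≤ u w := fun w => by
    have := hcσ_nonneg w; simp only [hu_def]; linarith
  have hlh : ∀ w, l w ≤ h w := fun w => by
    have := (abs_le.mp (hhf w)).1; simp only [hl_def]; linarith
  have hhu : ∀ w, h w ≤ u w := fun w => by
    have := (abs_le.mp (hhf w)).2; simp only [hu_def]; linarith
  set Qu := Qfun μ ε u with hQu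
  set Ql := Qfun μ ε l with hQl
  set A := {w | l w ≤ Qu} with hA
  -- A is nonempty
  have hAne : A.Nonempty := by
    by_contra hemp
    rw [Set.not_nonempty_iff_eq_empty] at hemp
    have hall : ∀ w, Qu < l w := by
      intro w
      by_contra hw
      push_neg at hw
      exact absurd (Set.eq_empty_iff_forall_notMem.mp hemp w) (by simp [hA, hw])
    set s : ℕ → Set W := fun n => {w | l w < Qu + 1 / (n + 1)} with hs_def
    have hlmeas : Measurable l := hfm.sub (hσm.const_mul c)
    have hmeas : ∀ n, NullMeasurableSet (s n) μ := fun n =>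
      (hlmeas measurableSet_Iio).nullMeasurableSet
    have hanti : Antitone s := by
      intro m n hmn w hw
      simp only [hs_def, Set.mem_setOf_eq] at hw ⊢
      have hc1 : (1 : ℝ) / (n + 1) ≤ 1 / (m + 1) := by
        apply one_div_le_one_div_of_le
        · positivity
        · have : (m : ℝ) ≤ n := Nat.cast_le.mpr hmn
          linarith
      linarith
    have hiInter : (⋂ n, s n) = ∅ := by
      rw [Set.eq_empty_iff_forall_notMem]
      intro w hw
      simp only [Set.mem_iInter, hs_def, Set.mem_setOf_eq] at hw
      have hle : l w ≤ Qu := by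
        by_contra hgt
        push_neg at hgt
        obtain ⟨n, hn⟩ := exists_nat_one_div_lt (sub_pos.mpr hgt)
        have := hw n
        linarith
      exact absurd (hall w) (not_lt.mpr hle)
    have htend : Tendsto (μ ∘ s) atTop (𝓝 (μ (⋂ n, s n))) :=
      tendsto_measure_iInter_atTop hmeas hanti ⟨0, measure_ne_top μ _⟩
    rw [hiInter, measure_empty] at htend
    have hge : ∀ n, ENNReal.ofReal ε ≤ (μ ∘ s) n := by
      intro n
      by_contra hlt
      push_neg at hlt
      have hmem : Qu + 1 / (n + 1) ∈ {ν : ℝ | μ {w | l w < ν} < ENNReal.ofReal ε} := hlt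
      have h1 : Qu + 1 / (n + 1) ≤ Ql := le_csSup (Qset_bddAbove hεμ hlb) hmem
      have hQlu : Ql ≤ Qu := Qfun_mono hε hεμ hlb hub hlu
      have hpos : (0 : ℝ) < 1 / (n + 1) := by positivity
      linarith
    have hfin : ENNReal.ofReal ε ≤ 0 := ge_of_tendsto htend (Eventually.of_forall hge)
    have : ¬ (ENNReal.ofReal ε ≤ 0) := by
      simp only [nonpos_iff_eq_zero]
      exact (ENNReal.ofReal_pos.mpr hε).ne'
    exact this hfin
  set M := sSup (σ '' A) with hM
  have hMbdd : BddAbove (σ '' A) := by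
    refine ⟨Cσ, ?_⟩
    rintro x ⟨w, _, rfl⟩
    exact (abs_le.mp (hCσ w)).2
  have hσleM : ∀ w ∈ A, σ w ≤ M := fun w hw => le_csSup hMbdd ⟨w, hw, rfl⟩
  have hMnonneg : 0 ≤ M := by
    obtain ⟨w, hw⟩ := hAne
    exact le_trans (hσ0 w) (hσleM w hw)
  have hcM : 0 ≤ c * M := mul_nonneg hc hMnonneg
  -- key inequality
  have key : ∀ (p q : W → ℝ) (Cp Cq : ℝ), (∀ w, |p w| ≤ Cp) → (∀ w, |q w| ≤ Cq) →
      (∀ w, p w ≤ u w) → (∀ w, l w ≤ q w) → (∀ w, p w ≤ q w + c * σ w) →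
      Qfun μ ε p ≤ Qfun μ ε q + c * M := by
    intro p q Cp Cq hCp hCq hpu hlq hpq
    refine csSup_le (Qset_nonempty hε hCp) ?_
    intro ν hν
    have hνQp : ν ≤ Qfun μ ε p := le_csSup (Qset_bddAbove hεμ hCp) hν
    have hQpQu : Qfun μ ε p ≤ Qu := Qfun_mono hε hεμ hCp hub hpu
    have hsub : {w | q w < ν - c * M} ⊆ {w | p w < ν} := by
      intro w hw
      simp only [Set.mem_setOf_eq] at hw ⊢
      have hwA : w ∈ A := by
        simp only [hA, Set.mem_setOf_eq]
        calc l w ≤ q w := hlq w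
          _ ≤ ν - c * M := hw.le
          _ ≤ ν := by linarith
          _ ≤ Qu := le_trans hνQp hQpQu
      have hσw : σ w ≤ M := hσleM w hwA
      have : c * σ w ≤ c * M := mul_le_mul_of_nonneg_left hσw hc
      calc p w ≤ q w + c * σ w := hpq w
        _ ≤ q w + c * M := by linarith
        _ < ν := by linarith
    have hmem : ν - c * M ∈ {ν' : ℝ | μ {w | q w < ν'} < ENNReal.ofReal ε} := by
      simp only [Set.mem_setOf_eq] at hν ⊢
      exact lt_of_le_of_lt (measure_mono hsub) hν
    have h3 : ν - c * M ≤ Qfun μ ε q := le_csSup (Qset_bddAbove hεμ hCq) hmem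
    linarith
  have h1 : Qfun μ ε f ≤ Qfun μ ε h + c * M :=
    key f h Cf Ch hCf hCh hfu hlh (fun w => by
      have := (abs_le.mp (hhf w)).1; linarith)
  have h2 : Qfun μ ε h ≤ Qfun μ ε f + c * M :=
    key h f Ch Cf hCh hCf hhu hlf (fun w => by
      have := (abs_le.mp (hhf w)).2; linarith)
  rw [abs_sub_le_iff]
  constructor <;> linarith
end
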